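/- arXiv:1801.01798 — 2 statements merged into one kernel-verified Lean document; each statement's English description precedes it below -/
import Mathlib

section
/- Let S = M⁰(G, I) be the Brandt semigroup over a group G with index set I. Then ℓ¹(S) has an ultra central approximate identity if and only if I is finite. -/
noncomputable section

open scoped Topology Classical

universe u v w

/-- The bidual of a complex normed space. -/
abbrev Bidual (A : Type*) [SeminormedAddCommGroup A] [NormedSpace ℂ A] : Type _ :=
  StrongDual ℂ (StrongDual ℂ A)

section BidualActions

variable {A : Type*} [NonUnitalNormedRing A] [NormedSpace ℂ A]
  [IsScalarTower ℂ A A] [SMulCommClass ℂ A A]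

/-- The natural left action of `A` on its bidual (coming from the Arens products, which agree
when one factor lies in `A`): `(bidualLSMul a m) f = m (fun b => f (a * b))`. -/
def bidualLSMul (a : A) (m : Bidual A) : Bidual A :=
  m.comp ((ContinuousLinearMap.compL ℂ A A ℂ).flip (ContinuousLinearMap.mul ℂ A a))

/-- The natural right action of `A` on its bidual:
`(bidualRSMul m a) f = m (fun b => f (b * a))`. -/
def bidualRSMul (m : Bidual A) (a : A) : Bidual A :=
  m.comp ((ContinuousLinearMap.compL ℂ A A ℂ).flip ((ContinuousLinearMap.mul ℂ A).flip a))

end BidualActions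

/-- A Banach algebra `A` has an *ultra central approximate identity* if there is a net
`(e α)` in the bidual `A**` such that `a · e α = e α · a` for all `a ∈ A` and
`e α · a → a` in norm, `A` being identified with its canonical image in `A**`. -/
def HasUltraCentralApproximateIdentity (A : Type u) [NonUnitalNormedRing A] [NormedSpace ℂ A]
    [IsScalarTower ℂ A A] [SMulCommClass ℂ A A] : Prop :=
  ∃ (ι : Type u) (_ : Preorder ι) (_ : Nonempty ι) (_ : IsDirected ι (· ≤ ·))
    (e : ι → Bidual A),
    (∀ (a : A) (α : ι), bidualLSMul a (e α) = bidualRSMul (e α) a) ∧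
    ∀ a : A, Filter.Tendsto (fun α => bidualRSMul (e α) a) Filter.atTop
      (𝓝 (NormedSpace.inclusionInDoubleDual ℂ A a))

/-- `B`, together with the point masses `δ s` for `s ∈ S`, is (a realization of) the
semigroup algebra `ℓ¹(S)`: the point masses multiply according to `S`, finitely supported
linear combinations of them carry the `ℓ¹`-norm, and they are dense in `B`. -/
structure IsL1SemigroupAlgebra (S : Type v) [Mul S] (B : Type u) [NonUnitalNormedRing B]
    [NormedSpace ℂ B] [IsScalarTower ℂ B B] [SMulCommClass ℂ B B] [CompleteSpace B]
    (δ : S → B) : Prop where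
  delta_mul : ∀ s t : S, δ s * δ t = δ (s * t)
  norm_eq : ∀ x : S →₀ ℂ, ‖x.sum fun s c => c • δ s‖ = x.sum fun _ c => ‖c‖
  dense : DenseRange fun x : S →₀ ℂ => x.sum fun s c => c • δ s

/-- The Brandt semigroup `M⁰(G, I)` over a group `G` with index set `I`:  its elements are
the "elementary matrices" `(g)_{i,j}` (encoded as `some (i, g, j)`) together with a zero
element (encoded as `none`). -/
def Brandt (G : Type*) (I : Type*) : Type _ := Option (I × G × I)

/-- Multiplication of the Brandt semigroup:
`(g)_{i,j} * (h)_{k,l} = (g*h)_{i,l}` if `j = k`, and `0` otherwise. -/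
instance brandtMul (G : Type*) [Mul G] (I : Type*) : Mul (Brandt G I) :=
  ⟨fun x y => match x, y with
    | some (i, g, j), some (k, h, l) => if j = k then some (i, g * h, l) else none
    | _, _ => none⟩

/-!
If `I` is finite, `ℓ¹(S)` has the identity `δ 0 + ∑ i, (δ (1)_{i,i} - δ 0)`, and the constant net at
its image in the bidual is an ultra central approximate identity.

Conversely, let `m ∈ ℓ¹(S)**` commute with `ℓ¹(S)`. Multiplying by `δ (1)_{i₀,i}` on the left
turns the coordinate functional at `(1)_{i₀,i}` into the one at `(1)_{i,i}`, and on the right into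
the one at `(1)_{i₀,i₀}`; so `m` takes one value `γ` on all diagonal coordinates. Since
`e_α · δ (1)_{i₀,i₀} → δ (1)_{i₀,i₀}`, some `m = e_α` has `γ ≠ 0`. But a sum of `n` distinct
coordinate functionals has norm at most `1`, so `n ‖γ‖ ≤ ‖m‖` for every `n ≤ |I|`, which forces
`I` to be finite.
-/

theorem Finsupp.norm_linearCombination_le {S : Type*} {C : ℝ} {φ : S → ℂ}
    (hφ : ∀ s, ‖φ s‖ ≤ C) (x : S →₀ ℂ) :
    ‖Finsupp.linearCombination ℂ φ x‖ ≤ C * x.sum fun _ c => ‖c‖ := by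
  rw [Finsupp.linearCombination_apply, Finsupp.sum, Finsupp.sum, Finset.mul_sum]
  refine (norm_sum_le _ _).trans (Finset.sum_le_sum fun s _ => ?_)
  rw [norm_smul, mul_comm]
  exact mul_le_mul_of_nonneg_right (hφ s) (norm_nonneg _)

namespace IsL1SemigroupAlgebra

variable {S : Type v} [Mul S] {B : Type u} [NonUnitalNormedRing B] [NormedSpace ℂ B]
  [IsScalarTower ℂ B B] [SMulCommClass ℂ B B] [CompleteSpace B] {δ : S → B}

theorem ext_delta {W : Type*} [NormedAddCommGroup W] [NormedSpace ℂ W]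
    (hδ : IsL1SemigroupAlgebra S B δ) {f g : B →L[ℂ] W} (h : ∀ t, f (δ t) = g (δ t)) :
    f = g := by
  refine ContinuousLinearMap.coeFn_injective <|
    hδ.dense.equalizer f.continuous g.continuous (funext fun x => ?_)
  simp only [Function.comp_apply, Finsupp.sum, map_sum, map_smul, h]

theorem norm_linearCombination (hδ : IsL1SemigroupAlgebra S B δ) (x : S →₀ ℂ) :
    ‖Finsupp.linearCombination ℂ δ x‖ = x.sum fun _ c => ‖c‖ := by
  rw [Finsupp.linearCombination_apply, hδ.norm_eq]

theorem linearCombination_injective (hδ : IsL1SemigroupAlgebra S B δ) :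
    Function.Injective (Finsupp.linearCombination ℂ δ) := by
  refine (injective_iff_map_eq_zero _).mpr fun x hx => ?_
  have h := hδ.norm_linearCombination x
  rw [hx, norm_zero, eq_comm, Finsupp.sum, Finset.sum_eq_zero_iff_of_nonneg
    fun _ _ => norm_nonneg _] at h
  ext s
  by_cases hs : s ∈ x.support
  · simpa using h s hs
  · simpa using hs

theorem exists_dual_delta_eq (hδ : IsL1SemigroupAlgebra S B δ) {C : ℝ} {φ : S → ℂ}
    (hφ : ∀ s, ‖φ s‖ ≤ C) : ∃ F : StrongDual ℂ B, ∀ t, F (δ t) = φ t := by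
  let e := LinearEquiv.ofInjective _ hδ.linearCombination_injective
  let ψ : LinearMap.range (Finsupp.linearCombination ℂ δ) →ₗ[ℂ] ℂ :=
    Finsupp.linearCombination ℂ φ ∘ₗ e.symm.toLinearMap
  have hψ : ∀ m, ‖ψ m‖ ≤ C * ‖m‖ := by
    intro m
    obtain ⟨x, rfl⟩ := e.surjective m
    rw [Submodule.coe_norm, LinearEquiv.ofInjective_apply, hδ.norm_linearCombination]
    simpa [ψ] using Finsupp.norm_linearCombination_le hφ x
  obtain ⟨F, hF, -⟩ := exists_extension_norm_eq _ (ψ.mkContinuous C hψ)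
  refine ⟨F, fun t => ?_⟩
  simpa [ψ, e] using hF (e (Finsupp.single t 1))

theorem norm_le_of_forall_delta (hδ : IsL1SemigroupAlgebra S B δ) {C : ℝ} (hC : 0 ≤ C)
    {F : StrongDual ℂ B} (hF : ∀ t, ‖F (δ t)‖ ≤ C) : ‖F‖ ≤ C := by
  refine F.opNorm_le_bound hC fun b => ?_
  refine isClosed_property hδ.dense (isClosed_le F.continuous.norm
    (continuous_norm.const_mul C)) (fun x => ?_) b
  show ‖F (x.sum fun s c => c • δ s)‖ ≤ C * ‖x.sum fun s c => c • δ s‖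
  rw [← Finsupp.linearCombination_apply, hδ.norm_linearCombination,
    ← ContinuousLinearMap.coe_coe, Finsupp.apply_linearCombination]
  exact Finsupp.norm_linearCombination_le hF x

/-- The coordinate functional `x ↦ x(s)` of `ℓ¹(S)`. -/
def coord (hδ : IsL1SemigroupAlgebra S B δ) (s : S) : StrongDual ℂ B :=
  (hδ.exists_dual_delta_eq (C := 1) (φ := fun t => if t = s then 1 else 0)
    fun t => by split_ifs <;> simp).choose

theorem coord_delta (hδ : IsL1SemigroupAlgebra S B δ) (s t : S) :
    hδ.coord s (δ t) = if t = s then 1 else 0 := by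
  unfold coord
  generalize_proofs h
  exact h.choose_spec t

theorem norm_sum_coord_le_one (hδ : IsL1SemigroupAlgebra S B δ) (J : Finset S) :
    ‖∑ s ∈ J, hδ.coord s‖ ≤ 1 := by
  refine hδ.norm_le_of_forall_delta zero_le_one fun t => ?_
  rw [sum_apply]
  simp only [coord_delta, Finset.sum_ite_eq]
  split_ifs <;> simp

theorem coord_comp_mul_left (hδ : IsL1SemigroupAlgebra S B δ) {a s s' : S}
    (h : ∀ t, a * t = s ↔ t = s') :
    (hδ.coord s).comp (ContinuousLinearMap.mul ℂ B (δ a)) = hδ.coord s' :=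
  hδ.ext_delta fun t => by simp [hδ.delta_mul, coord_delta, h]

theorem coord_comp_mul_right (hδ : IsL1SemigroupAlgebra S B δ) {a s s' : S}
    (h : ∀ t, t * a = s ↔ t = s') :
    (hδ.coord s).comp ((ContinuousLinearMap.mul ℂ B).flip (δ a)) = hδ.coord s' :=
  hδ.ext_delta fun t => by simp [hδ.delta_mul, coord_delta, h]

theorem mul_eq_self_of_forall_mul_delta (hδ : IsL1SemigroupAlgebra S B δ) {e : B}
    (h : ∀ t, e * δ t = δ t) (a : B) : e * a = a := by
  have : ContinuousLinearMap.mul ℂ B e = ContinuousLinearMap.id ℂ B :=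
    hδ.ext_delta fun t => h t
  exact congr($this a)

theorem mul_eq_self_of_forall_delta_mul (hδ : IsL1SemigroupAlgebra S B δ) {e : B}
    (h : ∀ t, δ t * e = δ t) (a : B) : a * e = a := by
  have : (ContinuousLinearMap.mul ℂ B).flip e = ContinuousLinearMap.id ℂ B :=
    hδ.ext_delta fun t => h t
  exact congr($this a)

end IsL1SemigroupAlgebra

section Bidual

variable {A : Type u} [NonUnitalNormedRing A] [NormedSpace ℂ A]
  [IsScalarTower ℂ A A] [SMulCommClass ℂ A A]

@[simp]
theorem bidualLSMul_apply (a : A) (m : Bidual A) (f : StrongDual ℂ A) :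
    bidualLSMul a m f = m (f.comp (ContinuousLinearMap.mul ℂ A a)) := rfl

@[simp]
theorem bidualRSMul_apply (m : Bidual A) (a : A) (f : StrongDual ℂ A) :
    bidualRSMul m a f = m (f.comp ((ContinuousLinearMap.mul ℂ A).flip a)) := rfl

theorem bidualRSMul_inclusionInDoubleDual (a c : A) :
    bidualRSMul (NormedSpace.inclusionInDoubleDual ℂ A c) a =
      NormedSpace.inclusionInDoubleDual ℂ A (c * a) := rfl

theorem bidualLSMul_inclusionInDoubleDual (a c : A) :
    bidualLSMul a (NormedSpace.inclusionInDoubleDual ℂ A c) =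
      NormedSpace.inclusionInDoubleDual ℂ A (a * c) := rfl

theorem hasUltraCentralApproximateIdentity_of_mul_identity {e : A}
    (h : ∀ a, e * a = a ∧ a * e = a) : HasUltraCentralApproximateIdentity A := by
  refine ⟨PUnit, inferInstance, inferInstance, inferInstance,
    fun _ => NormedSpace.inclusionInDoubleDual ℂ A e, fun a _ => ?_, fun a => ?_⟩
  · rw [bidualLSMul_inclusionInDoubleDual, bidualRSMul_inclusionInDoubleDual, (h a).1, (h a).2]
  · simp only [bidualRSMul_inclusionInDoubleDual, (h a).1, tendsto_const_nhds]

theorem HasUltraCentralApproximateIdentity.exists_central_apply_ne_zero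
    (h : HasUltraCentralApproximateIdentity A) {a : A} {f : StrongDual ℂ A}
    (hf : f.comp ((ContinuousLinearMap.mul ℂ A).flip a) = f) (ha : f a ≠ 0) :
    ∃ m : Bidual A, (∀ b, bidualLSMul b m = bidualRSMul m b) ∧ m f ≠ 0 := by
  obtain ⟨ι, _, _, _, e, hcentral, hconv⟩ := h
  have : Filter.Tendsto (fun α => e α f) Filter.atTop (𝓝 (f a)) := by
    simpa [Function.comp_def, hf] using
      ((ContinuousLinearMap.apply ℂ ℂ f).continuous.tendsto _).comp (hconv a)
  obtain ⟨α, hα⟩ := (this.eventually_ne ha).exists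
  exact ⟨e α, fun b => hcentral b α, hα⟩

end Bidual

theorem eq_zero_of_forall_apply_eq {𝕜 E ι : Type*} [RCLike 𝕜] [SeminormedAddCommGroup E]
    [NormedSpace 𝕜 E] [Infinite ι] (m : StrongDual 𝕜 E) {f : ι → E} {C : ℝ}
    (hf : ∀ J : Finset ι, ‖∑ i ∈ J, f i‖ ≤ C) {γ : 𝕜} (hm : ∀ i, m (f i) = γ) : γ = 0 := by
  have hbound (n : ℕ) : n * ‖γ‖ ≤ ‖m‖ * C := by
    obtain ⟨J, hJ⟩ := Infinite.exists_subset_card_eq ι n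
    calc n * ‖γ‖ = ‖m (∑ i ∈ J, f i)‖ := by simp [hm, hJ]
      _ ≤ ‖m‖ * C := m.le_of_opNorm_le_of_le le_rfl (hf J)
  by_contra hγ
  obtain ⟨n, hn⟩ := exists_nat_gt (‖m‖ * C / ‖γ‖)
  have := hbound n
  rw [div_lt_iff₀ (norm_pos_iff.mpr hγ)] at hn
  linarith

namespace Brandt

variable {G I : Type*}

/-- The element `(g)_{i,j}` of `M⁰(G, I)`. -/
def of (i : I) (g : G) (j : I) : Brandt G I := some (i, g, j)

instance : Zero (Brandt G I) := ⟨none⟩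

theorem of_inj {i k : I} {g h : G} {j l : I} :
    of i g j = of k h l ↔ i = k ∧ g = h ∧ j = l :=
  Option.some_inj.trans Prod.ext_iff |>.trans (and_congr_right' Prod.ext_iff)

theorem diag_injective (g : G) : Function.Injective fun i : I => of i g i :=
  fun _ _ h => (of_inj.mp h).1

theorem of_ne_zero (i : I) (g : G) (j : I) : of i g j ≠ 0 := Option.some_ne_none _

theorem recZeroOf {motive : Brandt G I → Prop} (zero : motive 0)
    (of : ∀ i g j, motive (of i g j)) (x : Brandt G I) : motive x := by
  rcases x with _ | ⟨i, g, j⟩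
  exacts [zero, of i g j]

section Mul

variable [Mul G]

theorem of_mul_of (i : I) (g : G) (j k : I) (h : G) (l : I) :
    of i g j * of k h l = if j = k then of i (g * h) l else 0 := rfl

protected theorem zero_mul (x : Brandt G I) : 0 * x = 0 := rfl

protected theorem mul_zero (x : Brandt G I) : x * 0 = 0 := by
  rcases x with _ | ⟨i, g, j⟩ <;> rfl

end Mul

variable [MulOneClass G]

theorem of_one_mul_eq_self_iff (i j : I) (t : Brandt G I) :
    of i 1 j * t = of i 1 j ↔ t = of j 1 j := by
  induction t using recZeroOf with
  | zero => simp [Brandt.mul_zero, (of_ne_zero _ _ _).symm]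
  | of k h l =>
    rw [of_mul_of]
    split_ifs with hjk
    · simp [of_inj, hjk, eq_comm]
    · simp [(of_ne_zero _ _ _).symm, of_inj, Ne.symm hjk]

theorem mul_of_one_eq_self_iff (i j : I) (t : Brandt G I) :
    t * of i 1 j = of i 1 j ↔ t = of i 1 i := by
  induction t using recZeroOf with
  | zero => simp [Brandt.zero_mul, (of_ne_zero _ _ _).symm]
  | of k h l =>
    rw [of_mul_of]
    split_ifs with hli
    · simp [of_inj, hli]
    · simp [(of_ne_zero _ _ _).symm, of_inj, hli]

theorem sum_diag_mul [Fintype I] {M : Type*} [AddCommGroup M] (f : Brandt G I → M)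
    (t : Brandt G I) : ∑ i, (f (of i 1 i * t) - f 0) = f t - f 0 := by
  induction t using recZeroOf with
  | zero => simp [Brandt.mul_zero]
  | of k h l =>
    rw [Finset.sum_eq_single k]
    · simp [of_mul_of]
    · intro i _ hik
      simp [of_mul_of, hik]
    · simp

theorem sum_mul_diag [Fintype I] {M : Type*} [AddCommGroup M] (f : Brandt G I → M)
    (t : Brandt G I) : ∑ i, (f (t * of i 1 i) - f 0) = f t - f 0 := by
  induction t using recZeroOf with
  | zero => simp [Brandt.zero_mul]
  | of k h l =>
    rw [Finset.sum_eq_single l]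
    · simp [of_mul_of]
    · intro i _ hil
      simp [of_mul_of, Ne.symm hil]
    · simp

end Brandt

namespace IsL1SemigroupAlgebra

open Brandt

variable {G I : Type*} [MulOneClass G] {B : Type u} [NonUnitalNormedRing B] [NormedSpace ℂ B]
  [IsScalarTower ℂ B B] [SMulCommClass ℂ B B] [CompleteSpace B] {δ : Brandt G I → B}

theorem brandt_exists_mul_identity [Finite I] (hδ : IsL1SemigroupAlgebra (Brandt G I) B δ) :
    ∃ e : B, ∀ a, e * a = a ∧ a * e = a := by
  cases nonempty_fintype I
  refine ⟨δ 0 + ∑ i, (δ (of i 1 i) - δ 0), fun a => ⟨?_, ?_⟩⟩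
  · refine hδ.mul_eq_self_of_forall_mul_delta (fun t => ?_) a
    simp only [add_mul, Finset.sum_mul, sub_mul, hδ.delta_mul, Brandt.zero_mul, sum_diag_mul]
    exact add_sub_cancel _ _
  · refine hδ.mul_eq_self_of_forall_delta_mul (fun t => ?_) a
    simp only [mul_add, Finset.mul_sum, mul_sub, hδ.delta_mul, Brandt.mul_zero, sum_mul_diag]
    exact add_sub_cancel _ _

theorem brandt_finite_of_hasUltraCentralApproximateIdentity
    (hδ : IsL1SemigroupAlgebra (Brandt G I) B δ) (h : HasUltraCentralApproximateIdentity B) :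
    Finite I := by
  by_contra hI
  have : Infinite I := not_finite_iff_infinite.mp hI
  obtain ⟨i₀⟩ := (inferInstance : Nonempty I)
  obtain ⟨m, hm, hm₀⟩ := h.exists_central_apply_ne_zero (a := δ (of i₀ 1 i₀))
    (hδ.coord_comp_mul_right (mul_of_one_eq_self_iff i₀ i₀)) (by simp [coord_delta])
  have hdiag (i : I) : m (hδ.coord (of i 1 i)) = m (hδ.coord (of i₀ (1 : G) i₀)) := by
    simpa [hδ.coord_comp_mul_left (of_one_mul_eq_self_iff i₀ i),
      hδ.coord_comp_mul_right (mul_of_one_eq_self_iff i₀ i)]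
      using congr($(hm (δ (of i₀ 1 i))) (hδ.coord (of i₀ 1 i)))
  refine hm₀ (eq_zero_of_forall_apply_eq m (C := 1) (fun J => ?_) hdiag)
  simpa using hδ.norm_sum_coord_le_one (J.map ⟨_, diag_injective (1 : G)⟩)

end IsL1SemigroupAlgebra

theorem l1_brandt_hasUltraCentralApproximateIdentity_iff_finite_general
    (G : Type v) [Group G] (I : Type v)
    (B : Type u) [NonUnitalNormedRing B] [NormedSpace ℂ B]
    [IsScalarTower ℂ B B] [SMulCommClass ℂ B B] [CompleteSpace B]
    (δ : Brandt G I → B) (hδ : IsL1SemigroupAlgebra (Brandt G I) B δ) :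
    HasUltraCentralApproximateIdentity B ↔ Finite I := by
  refine ⟨hδ.brandt_finite_of_hasUltraCentralApproximateIdentity, fun _ => ?_⟩
  obtain ⟨e, he⟩ := hδ.brandt_exists_mul_identity
  exact hasUltraCentralApproximateIdentity_of_mul_identity he

/-- **Theorem 2.7.** Let `S = M⁰(G, I)` be the Brandt semigroup over a group `G` with
non-empty index set `I`.  Then `ℓ¹(S)` (realized by a Banach algebra `B` with point masses
`δ`) has an ultra central approximate identity if and only if `I` is finite. -/
theorem l1_brandt_hasUltraCentralApproximateIdentity_iff_finite
    (G : Type v) [Group G] (I : Type v) [Nonempty I]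
    (B : Type u) [NonUnitalNormedRing B] [NormedSpace ℂ B]
    [IsScalarTower ℂ B B] [SMulCommClass ℂ B B] [CompleteSpace B]
    (δ : Brandt G I → B) (hδ : IsL1SemigroupAlgebra (Brandt G I) B δ) :
    HasUltraCentralApproximateIdentity B ↔ Finite I :=
  l1_brandt_hasUltraCentralApproximateIdentity_iff_finite_general G I B δ hδ
end
end

section
/- Let (A_λ)_{λ∈Λ} be a family of Banach algebras and let A = ℓ¹-⊕_{λ∈Λ} A_λ be their ℓ¹-direct sum. If A has an ultra central approximate identity, then each A_λ has an ultra central approximate identity. -/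
noncomputable section

open scoped Topology Classical

universe u v w

/-- `B`, together with the coordinate embeddings `e l : A l →ₗ[ℂ] B`, is (a realization of)
the `ℓ¹`-direct sum `ℓ¹-⊕_{l ∈ Λ} A l` of the family of Banach algebras `(A l)`:
the embeddings have orthogonal multiplicative ranges, finite sums of coordinates carry the
`ℓ¹`-norm, and they are dense in `B`. -/
structure IsL1DirectSum {Λ : Type v} (A : Λ → Type w) [∀ l, NonUnitalNormedRing (A l)]
    [∀ l, NormedSpace ℂ (A l)] [∀ l, IsScalarTower ℂ (A l) (A l)]
    [∀ l, SMulCommClass ℂ (A l) (A l)]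
    (B : Type u) [NonUnitalNormedRing B] [NormedSpace ℂ B] [IsScalarTower ℂ B B]
    [SMulCommClass ℂ B B] [CompleteSpace B] (e : ∀ l, A l →ₗ[ℂ] B) : Prop where
  mul_same : ∀ (l : Λ) (x y : A l), e l x * e l y = e l (x * y)
  mul_ne : ∀ (l m : Λ) (x : A l) (y : A m), l ≠ m → e l x * e m y = 0
  norm_sum : ∀ (s : Finset Λ) (x : ∀ l, A l), ‖∑ l ∈ s, e l (x l)‖ = ∑ l ∈ s, ‖x l‖
  dense : DenseRange fun p : Finset Λ × (∀ l, A l) => ∑ l ∈ p.1, e l (p.2 l)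


/-!
The coordinate projection `P : B → A l` of the `ℓ¹`-sum, obtained by extending the coordinate
map of the algebraic direct sum by continuity, is a bimodule map over `A l` (acting on `B`
through `e l`) with `P ∘ e l = id`. Its double transpose `P**` intertwines the actions of `B` on
`B**` with those of `A l` on `(A l)**` and maps the canonical image of `b` to that of `P b`, so
for an ultra central approximate identity `(E α)` of `B`,
`a · P** E α = P** (e a · E α) = P** (E α · e a) = P** E α · a → P (e a) = a`.
-/

open scoped DirectSum

section BidualMap

variable {E F : Type*} [SeminormedAddCommGroup E] [NormedSpace ℂ E]
  [SeminormedAddCommGroup F] [NormedSpace ℂ F]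

def bidualMap (P : F →L[ℂ] E) : Bidual F →L[ℂ] Bidual E :=
  (ContinuousLinearMap.compL ℂ (StrongDual ℂ E) (StrongDual ℂ F) ℂ).flip
    ((ContinuousLinearMap.compL ℂ F E ℂ).flip P)

theorem bidualMap_inclusionInDoubleDual (P : F →L[ℂ] E) (x : F) :
    bidualMap P (NormedSpace.inclusionInDoubleDual ℂ F x) =
      NormedSpace.inclusionInDoubleDual ℂ E (P x) :=
  rfl

end BidualMap

section BidualMapActions

variable {A B : Type*} [NonUnitalNormedRing A] [NormedSpace ℂ A] [IsScalarTower ℂ A A]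
  [SMulCommClass ℂ A A] [NonUnitalNormedRing B] [NormedSpace ℂ B] [IsScalarTower ℂ B B]
  [SMulCommClass ℂ B B]

theorem bidualLSMul_bidualMap {P : B →L[ℂ] A} {a : A} {c : B} (h : ∀ b, P (c * b) = a * P b)
    (m : Bidual B) : bidualLSMul a (bidualMap P m) = bidualMap P (bidualLSMul c m) := by
  ext f
  exact congrArg m (ContinuousLinearMap.ext fun b => congrArg f (h b).symm)

theorem bidualRSMul_bidualMap {P : B →L[ℂ] A} {a : A} {c : B} (h : ∀ b, P (b * c) = P b * a)
    (m : Bidual B) : bidualRSMul (bidualMap P m) a = bidualMap P (bidualRSMul m c) := by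
  ext f
  exact congrArg m (ContinuousLinearMap.ext fun b => congrArg f (h b).symm)

end BidualMapActions

theorem HasUltraCentralApproximateIdentity.of_bimodule_retraction {A B : Type u}
    [NonUnitalNormedRing A] [NormedSpace ℂ A] [IsScalarTower ℂ A A] [SMulCommClass ℂ A A]
    [NonUnitalNormedRing B] [NormedSpace ℂ B] [IsScalarTower ℂ B B] [SMulCommClass ℂ B B]
    (h : HasUltraCentralApproximateIdentity B) (P : B →L[ℂ] A) (j : A → B)
    (hPj : ∀ a, P (j a) = a) (hl : ∀ a b, P (j a * b) = a * P b)
    (hr : ∀ a b, P (b * j a) = P b * a) :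
    HasUltraCentralApproximateIdentity A := by
  obtain ⟨ι, _, _, _, E, hcomm, htends⟩ := h
  refine ⟨ι, ‹_›, ‹_›, ‹_›, fun α => bidualMap P (E α), fun a α => ?_, fun a => ?_⟩
  · rw [bidualLSMul_bidualMap (hl a), hcomm, bidualRSMul_bidualMap (hr a)]
  · simp_rw [bidualRSMul_bidualMap (hr a)]
    simpa only [Function.comp_def, bidualMap_inclusionInDoubleDual, hPj] using
      ((bidualMap P).continuous.tendsto _).comp (htends (j a))

theorem DirectSum.toModule_apply_eq_sum {R ι N : Type*} {M : ι → Type*} [Semiring R]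
    [∀ i, AddCommMonoid (M i)] [∀ i, Module R (M i)] [AddCommMonoid N] [Module R N]
    [DecidableEq ι] [∀ i (x : M i), Decidable (x ≠ 0)] (φ : ∀ i, M i →ₗ[R] N) (x : ⨁ i, M i) :
    DirectSum.toModule R ι N φ x = ∑ i ∈ x.support, φ i (x i) :=
  DFinsupp.sumAddHom_apply _ _

/-- A junk value (possibly `0`) unless `e` realizes an `ℓ¹`-direct sum. -/
def l1Proj {Λ : Type v} {A : Λ → Type w} [∀ l, NormedAddCommGroup (A l)]
    [∀ l, NormedSpace ℂ (A l)] [∀ l, CompleteSpace (A l)] {B : Type u}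
    [SeminormedAddCommGroup B] [NormedSpace ℂ B] (e : ∀ l, A l →ₗ[ℂ] B) (l : Λ) :
    B →L[ℂ] A l :=
  (DirectSum.component ℂ Λ A l).extendOfNorm (DirectSum.toModule ℂ Λ B e)

namespace IsL1DirectSum

variable {Λ : Type v} {A : Λ → Type w} [∀ l, NonUnitalNormedRing (A l)]
  [∀ l, NormedSpace ℂ (A l)] [∀ l, IsScalarTower ℂ (A l) (A l)]
  [∀ l, SMulCommClass ℂ (A l) (A l)]
  {B : Type u} [NonUnitalNormedRing B] [NormedSpace ℂ B] [IsScalarTower ℂ B B]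
  [SMulCommClass ℂ B B] [CompleteSpace B] {e : ∀ l, A l →ₗ[ℂ] B}

theorem norm_apply_le_norm_toModule (hB : IsL1DirectSum A B e) (x : ⨁ l, A l) (l : Λ) :
    ‖x l‖ ≤ ‖DirectSum.toModule ℂ Λ B e x‖ := by
  rw [DirectSum.toModule_apply_eq_sum, hB.norm_sum x.support fun m => x m]
  by_cases hl : l ∈ x.support
  · exact Finset.single_le_sum (fun m _ => norm_nonneg (x m)) hl
  · rw [DFinsupp.notMem_support_iff.mp hl, norm_zero]
    exact Finset.sum_nonneg fun m _ => norm_nonneg (x m)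

theorem denseRange_toModule (hB : IsL1DirectSum A B e) :
    DenseRange (DirectSum.toModule ℂ Λ B e) := by
  refine hB.dense.mono ?_
  rintro _ ⟨⟨s, x⟩, rfl⟩
  refine ⟨∑ m ∈ s, DirectSum.lof ℂ Λ A m (x m), ?_⟩
  simp only [map_sum, DirectSum.toModule_lof]

theorem mul_toModule (hB : IsL1DirectSum A B e) (l : Λ) (a : A l) (x : ⨁ m, A m) :
    e l a * DirectSum.toModule ℂ Λ B e x = e l (a * x l) := by
  induction x using DirectSum.induction_on with
  | zero => simp
  | of m y =>
    rw [← DirectSum.lof_eq_of ℂ, DirectSum.toModule_lof]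
    by_cases hml : m = l
    · subst hml
      rw [hB.mul_same, DirectSum.lof_apply]
    · rw [hB.mul_ne l m a y (Ne.symm hml), DirectSum.lof_eq_of,
        DirectSum.of_eq_of_ne _ _ _ (Ne.symm hml), mul_zero, map_zero]
  | add x y hx hy => rw [map_add, mul_add, hx, hy, DirectSum.add_apply, mul_add, map_add]

theorem toModule_mul (hB : IsL1DirectSum A B e) (l : Λ) (a : A l) (x : ⨁ m, A m) :
    DirectSum.toModule ℂ Λ B e x * e l a = e l (x l * a) := by
  induction x using DirectSum.induction_on with
  | zero => simp
  | of m y =>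
    rw [← DirectSum.lof_eq_of ℂ, DirectSum.toModule_lof]
    by_cases hml : m = l
    · subst hml
      rw [hB.mul_same, DirectSum.lof_apply]
    · rw [hB.mul_ne m l y a hml, DirectSum.lof_eq_of,
        DirectSum.of_eq_of_ne _ _ _ (Ne.symm hml), zero_mul, map_zero]
  | add x y hx hy => rw [map_add, add_mul, hx, hy, DirectSum.add_apply, add_mul, map_add]

variable [∀ l, CompleteSpace (A l)]

theorem l1Proj_toModule (hB : IsL1DirectSum A B e) (l : Λ) (x : ⨁ m, A m) :
    l1Proj e l (DirectSum.toModule ℂ Λ B e x) = x l :=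
  LinearMap.extendOfNorm_eq hB.denseRange_toModule
    ⟨1, fun y => by rw [one_mul]; exact hB.norm_apply_le_norm_toModule y l⟩ x

theorem l1Proj_apply_self (hB : IsL1DirectSum A B e) (l : Λ) (a : A l) :
    l1Proj e l (e l a) = a := by
  simpa using hB.l1Proj_toModule l (DirectSum.lof ℂ Λ A l a)

theorem l1Proj_mul_left (hB : IsL1DirectSum A B e) (l : Λ) (a : A l) (b : B) :
    l1Proj e l (e l a * b) = a * l1Proj e l b := by
  refine hB.denseRange_toModule.induction_on b (isClosed_eq (by fun_prop) (by fun_prop)) ?_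
  intro x
  rw [hB.mul_toModule, hB.l1Proj_apply_self, hB.l1Proj_toModule]

theorem l1Proj_mul_right (hB : IsL1DirectSum A B e) (l : Λ) (a : A l) (b : B) :
    l1Proj e l (b * e l a) = l1Proj e l b * a := by
  refine hB.denseRange_toModule.induction_on b (isClosed_eq (by fun_prop) (by fun_prop)) ?_
  intro x
  rw [hB.toModule_mul, hB.l1Proj_apply_self, hB.l1Proj_toModule]

end IsL1DirectSum

/-- If the `ℓ¹`-direct sum `B = ℓ¹-⊕_{l ∈ Λ} A l` of a family of Banach algebras has an
ultra central approximate identity, then so does each summand `A l`. -/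
theorem hasUltraCentralApproximateIdentity_of_l1DirectSum
    {Λ : Type v} (A : Λ → Type u) [∀ l, NonUnitalNormedRing (A l)]
    [∀ l, NormedSpace ℂ (A l)] [∀ l, IsScalarTower ℂ (A l) (A l)]
    [∀ l, SMulCommClass ℂ (A l) (A l)] [∀ l, CompleteSpace (A l)]
    (B : Type u) [NonUnitalNormedRing B] [NormedSpace ℂ B] [IsScalarTower ℂ B B]
    [SMulCommClass ℂ B B] [CompleteSpace B] (e : ∀ l, A l →ₗ[ℂ] B)
    (hB : IsL1DirectSum A B e) (h : HasUltraCentralApproximateIdentity B) :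
    ∀ l : Λ, HasUltraCentralApproximateIdentity (A l) := fun l =>
  h.of_bimodule_retraction (l1Proj e l) (e l) (hB.l1Proj_apply_self l) (hB.l1Proj_mul_left l)
    (hB.l1Proj_mul_right l)
end
end
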